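/- arXiv:1009.4375 — 6 statements merged into one kernel-verified Lean document; each statement's English description precedes it below -/
import Mathlib

section
/- Let A be an n×n complex Hermitian matrix and let 0 < ℓ < L be reals. If a_{ii} ≥ L for all i and |a_{ij}| ≤ ℓ for all i ≠ j, then rank(A) ≥ n/(1 + n·(ℓ/L)²) ≥ n − (nℓ/L)². -/
/-!
For a Hermitian matrix `B`, Cauchy–Schwarz over its nonzero eigenvalues gives
`(tr B)² ≤ rank B · ∑ λᵢ² = rank B · ∑ |b_ij|²`. Applied to `B = D^{-1/2} A D^{-1/2}`, where `D` is
the diagonal of `A`, which has unit diagonal, off-diagonal entries of size at most `ℓ / L` and rank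
at most `rank A`, this gives `n² ≤ rank A · n (1 + n (ℓ / L)²)`.
-/

open Finset Matrix

namespace Matrix

variable {𝕜 ι : Type*} [RCLike 𝕜]

namespace IsHermitian

variable {A : Matrix ι ι 𝕜} (hA : A.IsHermitian)
include hA

theorem ofReal_re_apply_self (i : ι) : ((RCLike.re (A i i) : ℝ) : 𝕜) = A i i :=
  RCLike.conj_eq_iff_re.mp (hA.apply i i)

variable [Fintype ι]

theorem trace_mul_self_eq_sum_norm_sq :
    (A * A).trace = ∑ i, ∑ j, ((‖A i j‖ ^ 2 : ℝ) : 𝕜) := by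
  refine sum_congr rfl fun i _ => ?_
  simp only [diag_apply, mul_apply]
  refine sum_congr rfl fun j _ => ?_
  rw [← hA.apply j i, RCLike.star_def, RCLike.mul_conj]
  norm_cast

variable [DecidableEq ι]

theorem trace_mul_self_eq_sum_eigenvalues_sq :
    (A * A).trace = ∑ i, ((hA.eigenvalues i ^ 2 : ℝ) : 𝕜) := by
  conv_lhs => rw [hA.spectral_theorem, ← map_mul, Unitary.conjStarAlgAut_apply, trace_mul_cycle,
    Unitary.coe_star_mul_self, one_mul, diagonal_mul_diagonal, trace_diagonal]
  simp [sq]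

theorem sum_eigenvalues_sq_eq_sum_norm_sq :
    ∑ i, hA.eigenvalues i ^ 2 = ∑ i, ∑ j, ‖A i j‖ ^ 2 := by
  have h := hA.trace_mul_self_eq_sum_eigenvalues_sq.symm.trans hA.trace_mul_self_eq_sum_norm_sq
  exact_mod_cast h

theorem re_trace_eq_sum_eigenvalues : RCLike.re A.trace = ∑ i, hA.eigenvalues i := by
  simp [hA.trace_eq_sum_eigenvalues]

theorem sq_sum_eigenvalues_le_rank_mul_sum_sq :
    (∑ i, hA.eigenvalues i) ^ 2 ≤ A.rank * ∑ i, hA.eigenvalues i ^ 2 := by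
  set s := univ.filter fun i => hA.eigenvalues i ≠ 0
  have hrank : A.rank = #s := by rw [hA.rank_eq_card_non_zero_eigs, Fintype.card_subtype]
  calc (∑ i, hA.eigenvalues i) ^ 2 = (∑ i ∈ s, hA.eigenvalues i) ^ 2 := by
        rw [sum_filter_ne_zero]
    _ ≤ #s * ∑ i ∈ s, hA.eigenvalues i ^ 2 := sq_sum_le_card_mul_sum_sq
    _ ≤ A.rank * ∑ i, hA.eigenvalues i ^ 2 := by
        rw [hrank]
        exact mul_le_mul_of_nonneg_left (sum_le_sum_of_subset_of_nonneg (filter_subset _ _)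
          fun i _ _ => sq_nonneg _) (Nat.cast_nonneg _)

theorem re_trace_sq_le_rank_mul_sum_norm_sq :
    RCLike.re A.trace ^ 2 ≤ A.rank * ∑ i, ∑ j, ‖A i j‖ ^ 2 := by
  rw [hA.re_trace_eq_sum_eigenvalues, ← hA.sum_eigenvalues_sq_eq_sum_norm_sq]
  exact hA.sq_sum_eigenvalues_le_rank_mul_sum_sq

end IsHermitian

variable [Fintype ι] [DecidableEq ι]

theorem IsHermitian.card_le_rank_mul_of_diag_eq_one {B : Matrix ι ι 𝕜} (hB : B.IsHermitian)
    (hdiag : ∀ i, B i i = 1) (x : ℝ) (hoff : ∀ i j, i ≠ j → ‖B i j‖ ≤ x) :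
    (Fintype.card ι : ℝ) ≤ B.rank * (1 + Fintype.card ι * x ^ 2) := by
  set n := (Fintype.card ι : ℝ)
  have htrace : RCLike.re B.trace = n := by simp [trace, hdiag, n]
  have hentry (i j : ι) : ‖B i j‖ ^ 2 ≤ (if i = j then 1 else 0) + x ^ 2 := by
    by_cases h : i = j
    · subst h
      simp only [hdiag, norm_one, one_pow, if_true]
      exact le_add_of_nonneg_right (sq_nonneg x)
    · simpa [h] using pow_le_pow_left₀ (norm_nonneg _) (hoff i j h) 2
  have hfrob : ∑ i, ∑ j, ‖B i j‖ ^ 2 ≤ n * (1 + n * x ^ 2) := by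
    calc ∑ i, ∑ j, ‖B i j‖ ^ 2 ≤ ∑ i : ι, ∑ j : ι, ((if i = j then 1 else 0) + x ^ 2) :=
          sum_le_sum fun i _ => sum_le_sum fun j _ => hentry i j
      _ = n * (1 + n * x ^ 2) := by simp [sum_add_distrib, n]; ring
  have key : n * n ≤ n * (B.rank * (1 + n * x ^ 2)) := by
    calc n * n = RCLike.re B.trace ^ 2 := by rw [htrace, sq]
      _ ≤ B.rank * ∑ i, ∑ j, ‖B i j‖ ^ 2 := hB.re_trace_sq_le_rank_mul_sum_norm_sq
      _ ≤ B.rank * (n * (1 + n * x ^ 2)) := by gcongr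
      _ = n * (B.rank * (1 + n * x ^ 2)) := by ring
  obtain hn | hn := (show 0 ≤ n by positivity).eq_or_lt
  · rw [← hn]
    positivity
  · exact le_of_mul_le_mul_left key hn

noncomputable def invSqrtDiag (A : Matrix ι ι 𝕜) : Matrix ι ι 𝕜 :=
  diagonal fun i => (((√(RCLike.re (A i i)))⁻¹ : ℝ) : 𝕜)

noncomputable def unitDiagRescale (A : Matrix ι ι 𝕜) : Matrix ι ι 𝕜 :=
  (invSqrtDiag A)ᴴ * A * invSqrtDiag A

theorem unitDiagRescale_apply (A : Matrix ι ι 𝕜) (i j : ι) :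
    unitDiagRescale A i j =
      (((√(RCLike.re (A i i)))⁻¹ : ℝ) : 𝕜) * A i j * (((√(RCLike.re (A j j)))⁻¹ : ℝ) : 𝕜) := by
  simp [unitDiagRescale, invSqrtDiag, diagonal_conjTranspose, mul_diagonal, diagonal_mul]

theorem isHermitian_unitDiagRescale {A : Matrix ι ι 𝕜} (hA : A.IsHermitian) :
    (unitDiagRescale A).IsHermitian :=
  isHermitian_conjTranspose_mul_mul _ hA

theorem rank_unitDiagRescale_le (A : Matrix ι ι 𝕜) : (unitDiagRescale A).rank ≤ A.rank :=
  (rank_mul_le_left _ _).trans (rank_mul_le_right _ _)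

theorem IsHermitian.unitDiagRescale_apply_self {A : Matrix ι ι 𝕜} (hA : A.IsHermitian) {i : ι}
    (hi : 0 < RCLike.re (A i i)) : unitDiagRescale A i i = 1 := by
  rw [unitDiagRescale_apply, ← hA.ofReal_re_apply_self i]
  norm_cast
  rw [mul_right_comm, ← mul_inv, Real.mul_self_sqrt hi.le, inv_mul_cancel₀ hi.ne']

theorem norm_unitDiagRescale_apply_le (A : Matrix ι ι 𝕜) {L : ℝ} (hL : 0 < L) {i j : ι}
    (hi : L ≤ RCLike.re (A i i)) (hj : L ≤ RCLike.re (A j j)) :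
    ‖unitDiagRescale A i j‖ ≤ ‖A i j‖ / L := by
  have hsqrt : L ≤ √(RCLike.re (A j j)) * √(RCLike.re (A i i)) := by
    rw [← Real.sqrt_mul_self hL.le, ← Real.sqrt_mul (hL.le.trans hj)]
    exact Real.sqrt_le_sqrt (mul_le_mul hj hi hL.le (hL.le.trans hj))
  rw [unitDiagRescale_apply, norm_mul, norm_mul, RCLike.norm_ofReal, RCLike.norm_ofReal,
    abs_of_nonneg (by positivity), abs_of_nonneg (by positivity), mul_comm, ← mul_assoc,
    ← mul_inv, mul_comm, ← div_eq_mul_inv]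
  gcongr

end Matrix

/-- If an `n × n` complex Hermitian matrix has diagonal entries at least `L`
and off-diagonal entries of absolute value at most `ℓ` (with `0 < ℓ < L`), then
`rank(A) ≥ n / (1 + n (ℓ/L)²) ≥ n - (n ℓ / L)²`. -/
theorem hermitian_diag_dominant_rank {n : ℕ} (A : Matrix (Fin n) (Fin n) ℂ)
    (hA : A.IsHermitian) (ℓ L : ℝ) (hℓ : 0 < ℓ) (hL : ℓ < L)
    (hdiag : ∀ i, L ≤ (A i i).re)
    (hoff : ∀ i j, i ≠ j → ‖A i j‖ ≤ ℓ) :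
    (n : ℝ) - ((n : ℝ) * ℓ / L) ^ 2 ≤ (n : ℝ) / (1 + (n : ℝ) * (ℓ / L) ^ 2) ∧
      (n : ℝ) / (1 + (n : ℝ) * (ℓ / L) ^ 2) ≤ (A.rank : ℝ) := by
  have hL0 : 0 < L := hℓ.trans hL
  have hpos : 0 < 1 + (n : ℝ) * (ℓ / L) ^ 2 := by positivity
  constructor
  · -- `(n - n²x²)(1 + n x²) = n - n³x⁴`
    rw [mul_div_assoc, le_div_iff₀ hpos]
    nlinarith [sq_nonneg ((n : ℝ) * (ℓ / L) ^ 2), Nat.cast_nonneg (α := ℝ) n]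
  · have hB := (isHermitian_unitDiagRescale hA).card_le_rank_mul_of_diag_eq_one
      (fun i => hA.unitDiagRescale_apply_self (hL0.trans_le (hdiag i))) (ℓ / L)
      fun i j hij => (A.norm_unitDiagRescale_apply_le hL0 (hdiag i) (hdiag j)).trans
        (by gcongr; exact hoff i j hij)
    rw [Fintype.card_fin] at hB
    rw [div_le_iff₀ hpos]
    exact hB.trans (by gcongr; exact_mod_cast A.rank_unitDiagRescale_le)
end

section
/- If an m×n matrix B (over any field) is a vertical concatenation (stacking of rows) of matrices each of which satisfies Property-S, then B satisfies Property-S. -/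
/-!
Clearing denominators, Property-S of an `m × n` matrix says that every all-zero `a × b` submatrix
has `a n + b m ≤ m n`, a condition that is additive in the rows. An all-zero submatrix of the
stacked matrix cuts each block in an all-zero `aₖ × b` submatrix with `aₖ n + b mₖ ≤ mₖ n`, and
summing over the blocks gives the condition for the stack.
-/

def PropertyS {F : Type} [Field F] {α β : Type} [Fintype α] [Fintype β]
    (A : Matrix α β F) : Prop :=
  ∀ (R : Finset α) (C : Finset β), (∀ i ∈ R, ∀ j ∈ C, A i j = 0) →
    (R.card : ℝ) / (Fintype.card α) + (C.card : ℝ) / (Fintype.card β) ≤ 1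

open Finset

theorem div_add_div_le_one_iff_of_le {a b m n : ℕ} (ha : a ≤ m) (hb : b ≤ n) :
    (a : ℝ) / m + b / n ≤ 1 ↔ a * n + b * m ≤ m * n := by
  rcases Nat.eq_zero_or_pos m with rfl | hm
  · obtain rfl : a = 0 := Nat.le_zero.1 ha
    simpa using div_le_one_of_le₀ (Nat.cast_le.2 hb) n.cast_nonneg
  rcases Nat.eq_zero_or_pos n with rfl | hn
  · obtain rfl : b = 0 := Nat.le_zero.1 hb
    simpa using div_le_one_of_le₀ (Nat.cast_le.2 ha) m.cast_nonneg
  have hm' : (0 : ℝ) < m := Nat.cast_pos.2 hm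
  have hn' : (0 : ℝ) < n := Nat.cast_pos.2 hn
  rw [div_add_div _ _ hm'.ne' hn'.ne', div_le_one (mul_pos hm' hn'), ← Nat.cast_le (α := ℝ)]
  push_cast
  constructor <;> intro h <;> linarith

theorem propertyS_iff_card_mul {F : Type} [Field F] {α β : Type} [Fintype α] [Fintype β]
    {A : Matrix α β F} :
    PropertyS A ↔ ∀ (R : Finset α) (C : Finset β), (∀ i ∈ R, ∀ j ∈ C, A i j = 0) →
      #R * Fintype.card β + #C * Fintype.card α ≤ Fintype.card α * Fintype.card β := by
  refine forall₂_congr fun R C => imp_congr_right fun _ => ?_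
  exact div_add_div_le_one_iff_of_le (card_le_univ R) (card_le_univ C)

theorem propertyS_sigma {F : Type} [Field F] {ι β : Type} [Fintype ι] [Fintype β]
    {κ : ι → Type} [∀ k, Fintype (κ k)] {A : ∀ k, Matrix (κ k) β F}
    (hA : ∀ k, PropertyS (A k)) :
    PropertyS (Matrix.of fun (p : Σ k, κ k) (j : β) => A p.1 p.2 j) := by
  classical
  rw [propertyS_iff_card_mul]
  intro R C hR
  set Rk := fun k => R.preimage (Sigma.mk k) sigma_mk_injective.injOn
  have hcard : #R = ∑ k, #(Rk k) := by
    rw [← card_sigma, sigma_preimage_mk_of_subset R (subset_univ _)]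
  have hblock (k : ι) :
      #(Rk k) * Fintype.card β + #C * Fintype.card (κ k) ≤ Fintype.card (κ k) * Fintype.card β :=
    propertyS_iff_card_mul.1 (hA k) _ C fun i hi j hj => hR ⟨k, i⟩ (mem_preimage.1 hi) j hj
  simp only [Fintype.card_sigma, hcard, sum_mul, mul_sum, ← sum_add_distrib]
  exact sum_le_sum fun k _ => hblock k

/-- A vertical concatenation (stacking of rows) of matrices each satisfying
Property-S satisfies Property-S. -/
theorem propertyS_of_vertical_concat {F : Type} [Field F] {s n : ℕ} (m : Fin s → ℕ)
    (A : ∀ k : Fin s, Matrix (Fin (m k)) (Fin n) F)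
    (hA : ∀ k, PropertyS (A k)) :
    PropertyS (Matrix.of fun (p : (k : Fin s) × Fin (m k)) (j : Fin n) => A p.1 p.2 j) :=
  propertyS_sigma hA
end

section
/- For every r ≥ 3 there exists a set T ⊆ [r]³ of r² − r triples such that: (1) each triple consists of three distinct elements; (2) every i ∈ [r] appears as an element of exactly 3(r−1) triples of T; (3) every pair of distinct i, j ∈ [r] appears together in at most 6 triples of T. -/
/-!
Take an idempotent Latin square `D` on `[r]` and the triples `(i, j, D i j)` with `i ≠ j`.
Such a square exists for every `r ≠ 2`: on `ℤ/r` with `r` odd take `D i j = 2i - j`, and for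
even `r` prolong that square of order `r - 1` along its transversal `{(i, i + 1)}`.
Idempotency makes the three entries of a triple distinct and puts each `i` exactly `r - 1` times
in each of the three coordinates. Since any two coordinates of a triple determine it, a pair
`{i, j}` lies in at most one triple for each of the `6` ordered pairs of positions it can occupy.
-/

open Finset Function

structure IsLatinSquare {α : Type*} (D : α → α → α) : Prop where
  row_injective : ∀ i, Injective (D i)
  col_injective : ∀ j, Injective fun i => D i j

structure IsIdempotentLatinSquare {α : Type*} (D : α → α → α) : Prop
    extends IsLatinSquare D where
  diag : ∀ i, D i i = i

section LatinSquare

variable {α β : Type*} {D : α → α → α}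

theorem IsLatinSquare.apply_right_inj (hD : IsLatinSquare D) {i j j' : α} :
    D i j = D i j' ↔ j = j' :=
  (hD.row_injective i).eq_iff

theorem IsLatinSquare.apply_left_inj (hD : IsLatinSquare D) {i i' j : α} :
    D i j = D i' j ↔ i = i' :=
  (hD.col_injective j).eq_iff

namespace IsIdempotentLatinSquare

theorem apply_ne_left (hD : IsIdempotentLatinSquare D) {i j : α} (hij : i ≠ j) : D i j ≠ i :=
  fun h => hij (hD.row_injective i ((hD.diag i).trans h.symm))

theorem apply_ne_right (hD : IsIdempotentLatinSquare D) {i j : α} (hij : i ≠ j) : D i j ≠ j :=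
  fun h => hij (hD.col_injective j (h.trans (hD.diag j).symm))

theorem map (hD : IsIdempotentLatinSquare D) (e : α ≃ β) :
    IsIdempotentLatinSquare fun x y => e (D (e.symm x) (e.symm y)) where
  diag x := by simp [hD.diag]
  row_injective x := e.injective.comp <| (hD.row_injective _).comp e.symm.injective
  col_injective y := e.injective.comp <| (hD.col_injective _).comp e.symm.injective

end IsIdempotentLatinSquare

/-- The cells `(i, σ i)` of `D` receive the new symbol `none`, and their old entries move to
the new row and the new column. -/
def prolong [DecidableEq α] (D : α → α → α) (σ : Equiv.Perm α) : Option α → Option α → Option α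
  | none, none => none
  | some i, none => some (D i (σ i))
  | none, some j => some (D (σ.symm j) j)
  | some i, some j => if j = σ i then none else some (D i j)

theorem IsIdempotentLatinSquare.prolong [DecidableEq α] (hD : IsIdempotentLatinSquare D)
    {σ : Equiv.Perm α} (hσ : ∀ i, σ i ≠ i) (htrans : Injective fun i => D i (σ i)) :
    IsIdempotentLatinSquare (prolong D σ) where
  diag
    | none => rfl
    | some i => by simp [_root_.prolong, hD.diag, Ne.symm (hσ i)]
  row_injective := by
    have htrans' : Injective fun j => D (σ.symm j) j := by
      simpa [comp_def] using htrans.comp σ.symm.injective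
    rintro (_ | i) (_ | j) (_ | j') h <;> simp only [_root_.prolong] at h ⊢ <;>
      (try split_ifs at h) <;> simp_all [hD.apply_right_inj, htrans'.eq_iff]
  col_injective := by
    rintro (_ | j) (_ | i) (_ | i') h <;> simp only [_root_.prolong] at h ⊢ <;>
      (try split_ifs at h) <;> simp_all [hD.apply_left_inj, htrans.eq_iff, Equiv.symm_apply_eq]

end LatinSquare

theorem isIdempotentLatinSquare_two_mul_sub {n : ℕ} (hn : Odd n) :
    IsIdempotentLatinSquare fun i j : ZMod n => 2 * i - j where
  diag i := by ring
  row_injective i := sub_right_injective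
  col_injective j := by
    have h2 : IsUnit (2 : ZMod n) := by
      exact_mod_cast (ZMod.isUnit_iff_coprime 2 n).2 (Nat.coprime_two_left.2 hn)
    exact sub_left_injective.comp h2.mul_right_injective

theorem isIdempotentLatinSquare_prolong_two_mul_sub {n : ℕ} (hn : Odd n) (hn1 : n ≠ 1) :
    IsIdempotentLatinSquare (prolong (fun i j : ZMod n => 2 * i - j) (Equiv.addRight 1)) := by
  refine (isIdempotentLatinSquare_two_mul_sub hn).prolong (fun i => ?_) fun i i' h => ?_
  · simpa [ZMod.one_eq_zero_iff] using hn1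
  · simpa [two_mul] using h

theorem exists_isIdempotentLatinSquare_fin {n : ℕ} (hn : n ≠ 2) :
    ∃ D : Fin n → Fin n → Fin n, IsIdempotentLatinSquare D := by
  obtain ⟨m, rfl | rfl⟩ := Nat.even_or_odd' n
  · obtain _ | _ | m := m
    · exact ⟨fun i => i.elim0, ⟨fun i => i.elim0, fun i => i.elim0⟩, fun i => i.elim0⟩
    · omega
    have hcard : Fintype.card (Option (ZMod (2 * m + 3))) = 2 * (m + 2) := by
      rw [Fintype.card_option, ZMod.card]; ring
    exact ⟨_, (isIdempotentLatinSquare_prolong_two_mul_sub ⟨m + 1, by ring⟩ (by omega)).map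
      (Fintype.equivFinOfCardEq hcard)⟩
  · have : NeZero (2 * m + 1) := ⟨by omega⟩
    exact ⟨_, (isIdempotentLatinSquare_two_mul_sub (odd_two_mul_add_one m)).map
      (Fintype.equivFinOfCardEq (ZMod.card _))⟩

section Triples

variable {α : Type*} {D : α → α → α}

theorem injective_latinTriple (D : α → α → α) :
    Injective fun p : α × α => (p.1, p.2, D p.1 p.2) :=
  fun _ _ h => Prod.ext (congrArg (·.1) h) (congrArg (·.2.1) h)

def tripleEntry (t : α × α × α) : Fin 3 → α := ![t.1, t.2.1, t.2.2]

variable [DecidableEq α]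

def tripleIndex (t : α × α × α) (x : α) : Fin 3 :=
  if t.1 = x then 0 else if t.2.1 = x then 1 else 2

theorem tripleEntry_tripleIndex {t : α × α × α} {x : α} (h : t.1 = x ∨ t.2.1 = x ∨ t.2.2 = x) :
    tripleEntry t (tripleIndex t x) = x := by
  unfold tripleIndex
  split_ifs <;> simp_all [tripleEntry]

theorem tripleIndex_ne {t : α × α × α} {i j : α} (hij : i ≠ j)
    (hi : t.1 = i ∨ t.2.1 = i ∨ t.2.2 = i) (hj : t.1 = j ∨ t.2.1 = j ∨ t.2.2 = j) :
    tripleIndex t i ≠ tripleIndex t j := fun h =>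
  hij ((tripleEntry_tripleIndex hi).symm.trans (h ▸ tripleEntry_tripleIndex hj))

variable [Fintype α]

def latinTriples (D : α → α → α) : Finset (α × α × α) :=
  univ.offDiag.image fun p => (p.1, p.2, D p.1 p.2)

theorem mem_latinTriples {t : α × α × α} :
    t ∈ latinTriples D ↔ t.1 ≠ t.2.1 ∧ t.2.2 = D t.1 t.2.1 := by
  obtain ⟨a, b, c⟩ := t
  simp [latinTriples, eq_comm]

theorem card_latinTriples (D : α → α → α) :
    #(latinTriples D) = Fintype.card α ^ 2 - Fintype.card α := by
  rw [latinTriples, card_image_of_injective _ (injective_latinTriple D), offDiag_card, card_univ,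
    sq]

theorem IsIdempotentLatinSquare.ne_of_mem_latinTriples (hD : IsIdempotentLatinSquare D)
    {t : α × α × α} (ht : t ∈ latinTriples D) : t.1 ≠ t.2.1 ∧ t.1 ≠ t.2.2 ∧ t.2.1 ≠ t.2.2 := by
  obtain ⟨hab, hc⟩ := mem_latinTriples.1 ht
  rw [hc]
  exact ⟨hab, (hD.apply_ne_left hab).symm, (hD.apply_ne_right hab).symm⟩

theorem card_filter_offDiag_of_row_injective {g : α → α → α} (hdiag : ∀ a, g a a = a)
    (hrow : ∀ a, Injective (g a)) (i : α) :
    #{p ∈ univ.offDiag | g p.1 p.2 = i} = Fintype.card α - 1 := by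
  rw [← card_univ, ← card_erase_of_mem (mem_univ i)]
  refine card_bij (fun p _ => p.1) (fun p hp => ?_) (fun p hp q hq hpq => ?_) fun a ha => ?_
  · simp only [mem_filter, mem_offDiag, mem_univ, true_and] at hp
    refine mem_erase.2 ⟨fun h => hp.1 (hrow p.1 ?_), mem_univ _⟩
    rw [hp.2, hdiag, h]
  · simp only [mem_filter] at hp hq
    exact Prod.ext hpq (hrow _ (hp.2.trans (hpq ▸ hq.2).symm))
  · obtain ⟨b, hb⟩ := Finite.injective_iff_surjective.1 (hrow a) i
    refine ⟨(a, b), ?_, rfl⟩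
    simp only [mem_filter, mem_offDiag, mem_univ, true_and]
    refine ⟨fun h => (mem_erase.1 ha).1 ?_, hb⟩
    rw [← hb, ← h, hdiag]

theorem card_filter_offDiag_snd (i : α) :
    #{p ∈ univ.offDiag | p.2 = i} = Fintype.card α - 1 :=
  card_filter_offDiag_of_row_injective (g := fun _ b => b) (fun _ => rfl) (fun _ => injective_id) i

theorem card_filter_offDiag_fst (i : α) :
    #{p ∈ univ.offDiag | p.1 = i} = Fintype.card α - 1 := by
  rw [← card_filter_offDiag_snd i]
  exact card_equiv (Equiv.prodComm α α) fun p => by simp [eq_comm]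

theorem IsIdempotentLatinSquare.card_filter_latinTriples_mem (hD : IsIdempotentLatinSquare D)
    (i : α) : #{t ∈ latinTriples D | t.1 = i ∨ t.2.1 = i ∨ t.2.2 = i} =
      3 * (Fintype.card α - 1) := by
  rw [latinTriples, filter_image, card_image_of_injective _ (injective_latinTriple D)]
  rw [filter_or, card_union_of_disjoint, filter_or, card_union_of_disjoint, card_filter_offDiag_fst,
    card_filter_offDiag_snd, card_filter_offDiag_of_row_injective hD.diag hD.row_injective]
  · ring
  · exact disjoint_filter.2 fun p hp hb hc =>
      hD.apply_ne_right (mem_offDiag.1 hp).2.2 (hc.trans hb.symm)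
  · refine disjoint_filter.2 fun p hp ha hbc => ?_
    have hab := (mem_offDiag.1 hp).2.2
    rcases hbc with hb | hc
    · exact hab (ha.trans hb.symm)
    · exact hD.apply_ne_left hab (hc.trans ha.symm)

theorem IsLatinSquare.eq_of_tripleEntry_eq (hD : IsLatinSquare D) {t t' : α × α × α}
    (ht : t ∈ latinTriples D) (ht' : t' ∈ latinTriples D) {k l : Fin 3} (hkl : k ≠ l)
    (hk : tripleEntry t k = tripleEntry t' k) (hl : tripleEntry t l = tripleEntry t' l) :
    t = t' := by
  obtain ⟨a, b, c⟩ := t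
  obtain ⟨a', b', c'⟩ := t'
  obtain ⟨-, rfl : c = D a b⟩ := mem_latinTriples.1 ht
  obtain ⟨-, rfl : c' = D a' b'⟩ := mem_latinTriples.1 ht'
  fin_cases k <;> fin_cases l <;> simp_all [tripleEntry, hD.apply_right_inj, hD.apply_left_inj]

theorem IsLatinSquare.card_filter_latinTriples_pair_le (hD : IsLatinSquare D) {i j : α}
    (hij : i ≠ j) :
    #{t ∈ latinTriples D | (t.1 = i ∨ t.2.1 = i ∨ t.2.2 = i) ∧
      (t.1 = j ∨ t.2.1 = j ∨ t.2.2 = j)} ≤ 6 :=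
  calc _ ≤ #(univ : Finset (Fin 3)).offDiag := by
        refine card_le_card_of_injOn (fun t => (tripleIndex t i, tripleIndex t j))
          (fun t ht => ?_) fun t ht t' ht' h => ?_
        · obtain ⟨-, hi, hj⟩ := mem_filter.1 ht
          simpa using tripleIndex_ne hij hi hj
        · obtain ⟨ht, hi, hj⟩ := mem_filter.1 ht
          obtain ⟨ht', hi', hj'⟩ := mem_filter.1 ht'
          obtain ⟨hti, htj⟩ := Prod.mk.inj h
          refine hD.eq_of_tripleEntry_eq ht ht' (tripleIndex_ne hij hi hj) ?_ ?_
          · rw [tripleEntry_tripleIndex hi, hti, tripleEntry_tripleIndex hi']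
          · rw [tripleEntry_tripleIndex hj, htj, tripleEntry_tripleIndex hj']
    _ = 6 := rfl

end Triples

/-- For every `r ≥ 3` there is a family `T` of `r² - r` triples from `[r]` such that
each triple has three distinct elements, every `i` lies in exactly `3(r-1)` triples,
and every pair of distinct elements lies in at most `6` triples. -/
theorem exists_triple_system (r : ℕ) (hr : 3 ≤ r) :
    ∃ T : Finset (Fin r × Fin r × Fin r),
      T.card = r ^ 2 - r ∧
      (∀ t ∈ T, t.1 ≠ t.2.1 ∧ t.1 ≠ t.2.2 ∧ t.2.1 ≠ t.2.2) ∧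
      (∀ i : Fin r,
        (T.filter fun t => t.1 = i ∨ t.2.1 = i ∨ t.2.2 = i).card = 3 * (r - 1)) ∧
      (∀ i j : Fin r, i ≠ j →
        (T.filter fun t => (t.1 = i ∨ t.2.1 = i ∨ t.2.2 = i) ∧
          (t.1 = j ∨ t.2.1 = j ∨ t.2.2 = j)).card ≤ 6) := by
  obtain ⟨D, hD⟩ := exists_isIdempotentLatinSquare_fin (n := r) (by omega)
  refine ⟨latinTriples D, ?_, fun t ht => hD.ne_of_mem_latinTriples ht, fun i => ?_,
    fun i j hij => hD.card_filter_latinTriples_pair_le hij⟩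
  · simpa using card_latinTriples D
  · simpa using hD.card_filter_latinTriples_mem i
end

section
/- Let H be a 3-uniform hypergraph on vertex set [m] with at least αm² edges, such that every pair of distinct vertices is contained in at most c edges. Then there exists a subset M ⊆ [m] with |M| ≥ αm/(2c) such that every vertex of M is contained in at least αm/2 edges of the subhypergraph induced by M. -/
/-!
Delete, one at a time, vertices whose degree in the current induced subhypergraph is below
`d = α m / 2`. Each deletion destroys fewer than `d` edges, so the surviving set `M` still spans
at least `α m² - d m = α m² / 2` edges; if `α m > 0` this forces `M ≠ ∅`. Every vertex `v` of `M`
has degree at least `d`, while by the codegree bound the edges through `v` inside `M` number at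
most `c (|M| - 1)`, one batch of at most `c` for each other vertex of `M`; so `c |M| ≥ d`.
-/

open Finset

section InducedSubhypergraph

variable {α : Type*} [DecidableEq α] (E : Finset (Finset α))

def inducedEdges (M : Finset α) : Finset (Finset α) := {e ∈ E | e ⊆ M}

def inducedDegree (M : Finset α) (v : α) : ℕ := #{e ∈ E | v ∈ e ∧ e ⊆ M}

variable {E}

lemma inducedEdges_empty (hE : ∀ e ∈ E, e.Nonempty) : inducedEdges E ∅ = ∅ := by
  simp only [inducedEdges, subset_empty, filter_eq_empty_iff]
  exact fun e he => (hE e he).ne_empty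

lemma inducedEdges_univ [Fintype α] : inducedEdges E univ = E :=
  filter_true_of_mem fun e _ => subset_univ e

lemma card_inducedEdges_erase_add_inducedDegree (M : Finset α) (v : α) :
    #(inducedEdges E (M.erase v)) + inducedDegree E M v = #(inducedEdges E M) := by
  have hnot : inducedEdges E (M.erase v) = {e ∈ inducedEdges E M | v ∉ e} := by
    simp only [inducedEdges, filter_filter, subset_erase]
  have hin : {e ∈ inducedEdges E M | v ∈ e} = {e ∈ E | v ∈ e ∧ e ⊆ M} := by
    simp only [inducedEdges, filter_filter, and_comm]
  rw [hnot, inducedDegree, ← hin, add_comm]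
  exact card_filter_add_card_filter_not _

lemma inducedDegree_le_card_mul {v : α} {c : ℕ} (hE : ∀ e ∈ E, 1 < #e)
    (hcodeg : ∀ u, v ≠ u → #{e ∈ E | v ∈ e ∧ u ∈ e} ≤ c) (M : Finset α) :
    inducedDegree E M v ≤ #(M.erase v) * c := by
  have hcover : {e ∈ E | v ∈ e ∧ e ⊆ M} ⊆
      (M.erase v).biUnion fun u => {e ∈ E | v ∈ e ∧ u ∈ e} := by
    intro e he
    obtain ⟨heE, hve, heM⟩ := by simpa only [mem_filter] using he
    obtain ⟨u, hue, huv⟩ := exists_mem_ne (hE e heE) v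
    simp only [mem_biUnion, mem_filter]
    exact ⟨u, mem_erase.2 ⟨huv, heM hue⟩, heE, hve, hue⟩
  calc inducedDegree E M v
      ≤ ∑ u ∈ M.erase v, #{e ∈ E | v ∈ e ∧ u ∈ e} :=
        (card_le_card hcover).trans card_biUnion_le
    _ ≤ ∑ _u ∈ M.erase v, c := sum_le_sum fun u hu => hcodeg u (ne_of_mem_erase hu).symm
    _ = #(M.erase v) * c := by rw [sum_const, smul_eq_mul]

theorem exists_subset_forall_le_inducedDegree (d : ℝ) (S : Finset α) :
    ∃ M ⊆ S, (∀ v ∈ M, d ≤ inducedDegree E M v) ∧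
      (#(inducedEdges E S) : ℝ) ≤ #(inducedEdges E M) + d * (#S - #M) := by
  induction S using Finset.strongInduction with
  | H S ih =>
    by_cases hcore : ∀ v ∈ S, d ≤ inducedDegree E S v
    · exact ⟨S, subset_rfl, hcore, by simp⟩
    simp only [not_forall, not_le] at hcore
    obtain ⟨v, hvS, hlow⟩ := hcore
    obtain ⟨M, hMS, hdeg, hedges⟩ := ih (S.erase v) (erase_ssubset hvS)
    refine ⟨M, hMS.trans (erase_subset v S), hdeg, ?_⟩
    have hsplit :
        (#(inducedEdges E S) : ℝ) = #(inducedEdges E (S.erase v)) + inducedDegree E S v := by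
      exact_mod_cast (card_inducedEdges_erase_add_inducedDegree S v).symm
    have hcard : (#(S.erase v) : ℝ) = #S - 1 := by
      rw [card_erase_of_mem hvS, Nat.cast_pred (card_pos.2 ⟨v, hvS⟩)]
    rw [hcard] at hedges
    linarith

end InducedSubhypergraph

theorem hypergraph_min_degree_subset_general (m c : ℕ) (α : ℝ)
    (E : Finset (Finset (Fin m)))
    (huniform : ∀ e ∈ E, e.card = 3)
    (hsize : α * (m : ℝ) ^ 2 ≤ (E.card : ℝ))
    (hcodeg : ∀ i j : Fin m, i ≠ j → (E.filter fun e => i ∈ e ∧ j ∈ e).card ≤ c) :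
    ∃ M : Finset (Fin m), α * m / (2 * c) ≤ (M.card : ℝ) ∧
      ∀ v ∈ M, α * m / 2 ≤ ((E.filter fun e => v ∈ e ∧ e ⊆ M).card : ℝ) := by
  have hE : ∀ e ∈ E, 1 < #e := fun e he => by simp [huniform e he]
  obtain ⟨M, -, hdeg, hedges⟩ :=
    exists_subset_forall_le_inducedDegree (E := E) (α * m / 2) univ
  refine ⟨M, ?_, hdeg⟩
  rw [inducedEdges_univ, card_univ, Fintype.card_fin] at hedges
  obtain rfl | ⟨v, hv⟩ := M.eq_empty_or_nonempty
  · rw [inducedEdges_empty fun e he => card_pos.1 (zero_lt_one.trans (hE e he))] at hedges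
    have hαm : α * m ≤ 0 := by
      rcases (Nat.cast_nonneg m : (0 : ℝ) ≤ m).eq_or_lt with hm | hm
      · simp [← hm]
      · simp only [card_empty, CharP.cast_eq_zero, sub_zero, zero_add] at hedges
        nlinarith
    simpa using div_nonpos_of_nonpos_of_nonneg hαm (by positivity)
  · have hdv : (inducedDegree E M v : ℝ) ≤ #M * c := by
      exact_mod_cast (inducedDegree_le_card_mul hE (hcodeg v) M).trans
        (Nat.mul_le_mul_right c (card_erase_le))
    rw [← div_div]
    exact div_le_of_le_mul₀ (by positivity) (by positivity) ((hdeg v hv).trans hdv)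

/-- In a 3-uniform hypergraph on `[m]` with at least `α m²` edges in which every
pair of distinct vertices lies in at most `c` edges, there is a subset `M` of at
least `α m / (2c)` vertices such that every vertex of `M` lies in at least
`α m / 2` edges of the subhypergraph induced by `M`. -/
theorem hypergraph_min_degree_subset (m c : ℕ) (hc : 0 < c) (α : ℝ)
    (E : Finset (Finset (Fin m)))
    (huniform : ∀ e ∈ E, e.card = 3)
    (hsize : α * (m : ℝ) ^ 2 ≤ (E.card : ℝ))
    (hcodeg : ∀ i j : Fin m, i ≠ j → (E.filter fun e => i ∈ e ∧ j ∈ e).card ≤ c) :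
    ∃ M : Finset (Fin m), α * m / (2 * c) ≤ (M.card : ℝ) ∧
      ∀ v ∈ M, α * m / 2 ≤ ((E.filter fun e => v ∈ e ∧ e ⊆ M).card : ℝ) :=
  hypergraph_min_degree_subset_general m c α E huniform hsize hcodeg
end

section
/- Let m ≥ n and let A be an m×n complex (q,k,t)-design matrix. Then rank(A) ≥ n − (q·t·n/(2k))². -/
/-!
Rescale `A` by nonnegative diagonal matrices, `B = D₁ A D₂`, so that every column of `B` has unit
norm while every row has squared norm at most about `q / k`. Such a scaling exists approximately:
an approximate minimizer of the convex potential
`∑ i j, |A i j|² exp (u i + v j) - ∑ i, r i u i - ∑ j, c j v j`, where `r` and `c` are the row and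
column sums of the matrix equal to `1 / k` on the support of `A`, has row and column sums within `ε`
of `r` and `c`. The Gram matrix `M = Bᴴ B` then has unit diagonal and, by AM-GM over the at most `t`
rows shared by two columns, off-diagonal entries of size at most `t q / (2k)`. Cauchy-Schwarz over
the nonzero eigenvalues gives `(tr M)² ≤ rank M * ∑ |M j j'|²`, which is the bound as `ε → 0`.
-/

open scoped Classical

/-- `A` is a `(q,k,t)`-design matrix: every row has at most `q` nonzero entries,
every column has at least `k` nonzero entries, and the supports of every two
distinct columns intersect in at most `t` rows. -/
def IsDesignMatrix {m n : ℕ} (A : Matrix (Fin m) (Fin n) ℂ) (q k t : ℕ) : Prop :=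
  (∀ i : Fin m, (Finset.univ.filter fun j => A i j ≠ 0).card ≤ q) ∧
  (∀ j : Fin n, k ≤ (Finset.univ.filter fun i => A i j ≠ 0).card) ∧
  (∀ j₁ j₂ : Fin n, j₁ ≠ j₂ →
    (Finset.univ.filter fun i => A i j₁ ≠ 0 ∧ A i j₂ ≠ 0).card ≤ t)

open Filter Set Finset Real Matrix

theorem exists_forall_sub_mul_norm_sub_le {E : Type*} [NormedAddCommGroup E] [ProperSpace E]
    {f : E → ℝ} (hf : Continuous f) (hbdd : BddBelow (range f)) {ε : ℝ} (hε : 0 < ε) :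
    ∃ x, ∀ y, f x - ε * ‖y - x‖ ≤ f y := by
  obtain ⟨C, hC⟩ := hbdd
  have hcoercive : Tendsto (fun x => f x + ε * ‖x‖) (cocompact E) atTop :=
    tendsto_atTop_add_left_of_le _ C (fun x => hC (mem_range_self x))
      (tendsto_norm_cocompact_atTop.const_mul_atTop hε)
  obtain ⟨x, hx⟩ := Continuous.exists_forall_le' (f := fun x => f x + ε * ‖x‖) (by fun_prop) 0
    (hcoercive.eventually_ge_atTop _)
  refine ⟨x, fun y => ?_⟩
  linarith [hx y, mul_le_mul_of_nonneg_left (norm_sub_norm_le y x) hε.le]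

theorem abs_le_of_hasDerivAt_of_forall_sub_mul_abs_le {φ : ℝ → ℝ} {d ε : ℝ}
    (hφ : HasDerivAt φ d 0) (hmin : ∀ s, φ 0 - ε * |s| ≤ φ s) : |d| ≤ ε := by
  have one_sided {σ : ℝ} (hσ : σ = 1 ∨ σ = -1) : 0 ≤ σ * d + ε := by
    have hmin' : IsLocalMinOn (fun s => φ (σ * s) + ε * s) (Ici 0) 0 :=
      (isMinOn_iff.mpr fun s (hs : 0 ≤ s) => by
        have := hmin (σ * s)
        rcases hσ with rfl | rfl <;> simp_all [abs_of_nonneg hs]).localize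
    have hderiv : HasDerivAt (fun s => φ (σ * s) + ε * s) (σ * d + ε) 0 := by
      have hlin : HasDerivAt (fun s : ℝ => σ * s) σ 0 := by
        simpa using (hasDerivAt_id (0 : ℝ)).const_mul σ
      have := (hφ.comp_of_eq 0 hlin (by simp)).add ((hasDerivAt_id (0 : ℝ)).const_mul ε)
      simp only [Function.comp_def, id, mul_one] at this
      rwa [mul_comm d] at this
    simpa using hmin'.hasFDerivWithinAt_nonneg hderiv.hasFDerivAt.hasFDerivWithinAt
      (y := 1) (mem_posTangentConeAt_of_segment_subset
        (by simpa [segment_eq_Icc] using Set.Icc_subset_Ici_self))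
  have h₁ := one_sided (Or.inl rfl)
  have h₂ := one_sided (Or.inr rfl)
  rw [abs_le]; constructor <;> linarith

theorem Fintype.sum_apply_update {ι α M : Type*} [Fintype ι] [DecidableEq ι] [AddCommGroup M]
    (F : ι → α → M) (u : ι → α) (i : ι) (a : α) :
    ∑ i', F i' (Function.update u i a i') = ∑ i', F i' (u i') + (F i a - F i (u i)) := by
  rw [Fintype.sum_eq_add_sum_compl i, Fintype.sum_eq_add_sum_compl i (fun i' => F i' (u i')),
    Function.update_self]
  have hrest : ∑ i' ∈ {i}ᶜ, F i' (Function.update u i a i') = ∑ i' ∈ {i}ᶜ, F i' (u i') :=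
    Finset.sum_congr rfl fun i' hi' => by
      rw [Function.update_of_ne (by simpa using hi')]
  rw [hrest]
  abel

section Scaling

variable {ι κ : Type*} [Fintype ι] [Fintype κ]

/-- The partial derivatives in `x.1 i` and `x.2 j` are the row and column sums of
`P i j * exp (x.1 i + x.2 j)` minus `r i` and `c j`. -/
noncomputable def scalingPotential (P : ι → κ → ℝ) (r : ι → ℝ) (c : κ → ℝ)
    (x : (ι → ℝ) × (κ → ℝ)) : ℝ :=
  ∑ i, ∑ j, P i j * exp (x.1 i + x.2 j) - ∑ i, r i * x.1 i - ∑ j, c j * x.2 j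

variable (P : ι → κ → ℝ) (r : ι → ℝ) (c : κ → ℝ)

theorem continuous_scalingPotential : Continuous (scalingPotential P r c) := by
  unfold scalingPotential; fun_prop

theorem scalingPotential_swap (x : (ι → ℝ) × (κ → ℝ)) :
    scalingPotential (fun j i => P i j) c r x.swap = scalingPotential P r c x := by
  simp only [scalingPotential, Prod.fst_swap, Prod.snd_swap]
  rw [Finset.sum_comm]
  simp_rw [add_comm (x.2 _) (x.1 _)]
  ring

theorem scalingPotential_update_fst [DecidableEq ι] (u : ι → ℝ) (v : κ → ℝ) (i : ι) (s : ℝ) :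
    scalingPotential P r c (Function.update u i (u i + s), v) =
      scalingPotential P r c (u, v) + (∑ j, P i j * exp (u i + v j)) * (exp s - 1) - r i * s := by
  have hexp := Fintype.sum_apply_update (fun i' w => ∑ j, P i' j * exp (w + v j)) u i (u i + s)
  have hlin := Fintype.sum_apply_update (fun i' w => r i' * w) u i (u i + s)
  simp only [scalingPotential, hexp, hlin, add_right_comm (u i) s, exp_add _ s, ← mul_assoc,
    ← Finset.sum_mul]
  ring

variable {P r c}

theorem abs_rowSum_sub_le_of_forall_sub_mul_norm_sub_le {x : (ι → ℝ) × (κ → ℝ)} {ε : ℝ}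
    (hx : ∀ y, scalingPotential P r c x - ε * ‖y - x‖ ≤ scalingPotential P r c y) (i : ι) :
    |∑ j, P i j * exp (x.1 i + x.2 j) - r i| ≤ ε := by
  obtain ⟨u, v⟩ := x
  set a := ∑ j, P i j * exp (u i + v j)
  refine abs_le_of_hasDerivAt_of_forall_sub_mul_abs_le (φ := fun s => a * exp s - r i * s) ?_ ?_
  · simpa using ((hasDerivAt_exp 0).const_mul a).fun_sub ((hasDerivAt_id (0 : ℝ)).const_mul (r i))
  · intro s
    have hnorm : ‖(Function.update u i (u i + s), v) - (u, v)‖ = |s| := by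
      have : Function.update u i (u i + s) - u = Pi.single i s := by
        ext i'; rcases eq_or_ne i' i with rfl | h <;> simp [*]
      simp [Prod.norm_def, this, Pi.norm_single]
    have := hx (Function.update u i (u i + s), v)
    rw [hnorm, scalingPotential_update_fst] at this
    simp only [exp_zero, mul_one, mul_zero, sub_zero]
    linarith

theorem abs_colSum_sub_le_of_forall_sub_mul_norm_sub_le {x : (ι → ℝ) × (κ → ℝ)} {ε : ℝ}
    (hx : ∀ y, scalingPotential P r c x - ε * ‖y - x‖ ≤ scalingPotential P r c y) (j : κ) :
    |∑ i, P i j * exp (x.1 i + x.2 j) - c j| ≤ ε := by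
  have hswap : ∀ y, scalingPotential (fun j i => P i j) c r x.swap - ε * ‖y - x.swap‖ ≤
      scalingPotential (fun j i => P i j) c r y := fun y => by
    have hy := scalingPotential_swap P r c y.swap
    rw [Prod.swap_swap] at hy
    simpa [hy, scalingPotential_swap, ← Prod.swap_sub, Prod.norm_def, max_comm] using hx y.swap
  simpa [add_comm] using abs_rowSum_sub_le_of_forall_sub_mul_norm_sub_le hswap j

theorem mul_one_add_log_div_le {p w : ℝ} (hp : 0 ≤ p) (hw : 0 ≤ w) (hwp : 0 < w → 0 < p)
    (s : ℝ) : w * (1 + log (p / w)) ≤ p * exp s - w * s := by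
  rcases hw.eq_or_lt with rfl | hw
  · simpa using mul_nonneg hp (exp_nonneg s)
  have hpw : 0 < p / w := div_pos (hwp hw) hw
  have := add_one_le_exp (s + log (p / w))
  rw [exp_add, exp_log hpw] at this
  calc w * (1 + log (p / w)) = w * (s + log (p / w) + 1) - w * s := by ring
    _ ≤ w * (exp s * (p / w)) - w * s := by gcongr
    _ = p * exp s - w * s := by field_simp

variable {W : ι → κ → ℝ}

theorem bddBelow_range_scalingPotential (hP : ∀ i j, 0 ≤ P i j) (hW : ∀ i j, 0 ≤ W i j)
    (hWP : ∀ i j, 0 < W i j → 0 < P i j) :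
    BddBelow (range (scalingPotential P (fun i => ∑ j, W i j) (fun j => ∑ i, W i j))) := by
  refine ⟨∑ i, ∑ j, W i j * (1 + log (P i j / W i j)), ?_⟩
  rintro _ ⟨x, rfl⟩
  have hsplit : scalingPotential P (fun i => ∑ j, W i j) (fun j => ∑ i, W i j) x =
      ∑ i, ∑ j, (P i j * exp (x.1 i + x.2 j) - W i j * (x.1 i + x.2 j)) := by
    simp only [scalingPotential, mul_add, Finset.sum_sub_distrib, Finset.sum_add_distrib,
      Finset.sum_mul]
    rw [Finset.sum_comm (f := fun i j => W i j * x.2 j)]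
    simp only [mul_comm (W _ _)]
    ring
  rw [hsplit]
  exact Finset.sum_le_sum fun i _ => Finset.sum_le_sum fun j _ =>
    mul_one_add_log_div_le (hP i j) (hW i j) (hWP i j) _

theorem exists_approx_scaling (hP : ∀ i j, 0 ≤ P i j) (hW : ∀ i j, 0 ≤ W i j)
    (hWP : ∀ i j, 0 < W i j → 0 < P i j) {ε : ℝ} (hε : 0 < ε) :
    ∃ (u : ι → ℝ) (v : κ → ℝ), (∀ i, |∑ j, P i j * exp (u i + v j) - ∑ j, W i j| ≤ ε) ∧
      ∀ j, |∑ i, P i j * exp (u i + v j) - ∑ i, W i j| ≤ ε := by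
  obtain ⟨x, hx⟩ := exists_forall_sub_mul_norm_sub_le (continuous_scalingPotential P _ _)
    (bddBelow_range_scalingPotential hP hW hWP) hε
  exact ⟨x.1, x.2, abs_rowSum_sub_le_of_forall_sub_mul_norm_sub_le hx,
    abs_colSum_sub_le_of_forall_sub_mul_norm_sub_le hx⟩

theorem exists_scaling_colSum_eq_one (hP : ∀ i j, 0 ≤ P i j) (hW : ∀ i j, 0 ≤ W i j)
    (hWP : ∀ i j, 0 < W i j → 0 < P i j) (hcol : ∀ j, 1 ≤ ∑ i, W i j) {ε : ℝ} (hε₀ : 0 < ε)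
    (hε₁ : ε < 1) :
    ∃ (x : ι → ℝ) (y : κ → ℝ), (∀ i, 0 ≤ x i) ∧ (∀ j, 0 ≤ y j) ∧
      (∀ j, ∑ i, x i * y j * P i j = 1) ∧
      ∀ i, ∑ j, x i * y j * P i j ≤ (∑ j, W i j + ε) / (1 - ε) := by
  obtain ⟨u, v, hrow, hcol'⟩ := exists_approx_scaling hP hW hWP hε₀
  set b := fun j => ∑ i, P i j * exp (u i + v j)
  have hb : ∀ j, 1 - ε ≤ b j := fun j => by linarith [(abs_le.mp (hcol' j)).1, hcol j]
  have hb₀ : ∀ j, 0 < b j := fun j => by linarith [hb j]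
  have hentry : ∀ i j, exp (u i) * (exp (v j) / b j) * P i j = P i j * exp (u i + v j) / b j :=
    fun i j => by rw [exp_add]; ring
  refine ⟨fun i => exp (u i), fun j => exp (v j) / b j, fun i => (exp_pos _).le,
    fun j => (div_pos (exp_pos _) (hb₀ j)).le, fun j => ?_, fun i => ?_⟩
  · simp only [hentry, ← Finset.sum_div]
    exact div_self (hb₀ j).ne'
  · calc ∑ j, exp (u i) * (exp (v j) / b j) * P i j
        ≤ ∑ j, P i j * exp (u i + v j) / (1 - ε) := by
          simp only [hentry]
          gcongr with j
          · exact mul_nonneg (hP i j) (exp_pos _).le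
          · exact hb j
      _ ≤ (∑ j, W i j + ε) / (1 - ε) := by
          rw [← Finset.sum_div]
          gcongr
          linarith [(abs_le.mp (hrow i)).2]

end Scaling

namespace Matrix

variable {𝕜 ι κ : Type*} [RCLike 𝕜] [Fintype ι]

theorem IsHermitian.re_trace_mul_self {A : Matrix ι ι 𝕜} (hA : A.IsHermitian) :
    RCLike.re (A * A).trace = ∑ i, ∑ j, ‖A i j‖ ^ 2 := by
  have hentry : ∀ i j, A i j * A j i = (‖A i j‖ ^ 2 : ℝ) := fun i j => by
    rw [← hA.apply j i, RCLike.star_def, RCLike.mul_conj]; push_cast; rfl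
  simp [trace, mul_apply, hentry]

theorem IsHermitian.re_trace_sq_le_rank_mul [DecidableEq ι] {A : Matrix ι ι 𝕜}
    (hA : A.IsHermitian) :
    RCLike.re A.trace ^ 2 ≤ A.rank * ∑ i, ∑ j, ‖A i j‖ ^ 2 := by
  set ev := hA.eigenvalues
  set Φ := Unitary.conjStarAlgAut 𝕜 _ hA.eigenvectorUnitary
  have htrace : RCLike.re A.trace = ∑ i, ev i := by simp [ev, hA.trace_eq_sum_eigenvalues]
  have htrace_conj : ∀ X, (Φ X).trace = X.trace := fun X => by
    rw [Unitary.conjStarAlgAut_apply, trace_mul_cycle, Unitary.coe_star_mul_self, Matrix.one_mul]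
  have hfrob : ∑ i, ∑ j, ‖A i j‖ ^ 2 = ∑ i, ev i ^ 2 := by
    rw [← hA.re_trace_mul_self, hA.spectral_theorem, ← map_mul, htrace_conj]
    simp [ev, sq]
  have hrank : A.rank = #{i | ev i ≠ 0} := by
    rw [hA.rank_eq_card_non_zero_eigs, Fintype.card_subtype]
  rw [htrace, hfrob, hrank, ← Finset.sum_filter_ne_zero]
  calc (∑ i with ev i ≠ 0, ev i) ^ 2 ≤ #{i | ev i ≠ 0} * ∑ i with ev i ≠ 0, ev i ^ 2 :=
        sq_sum_le_card_mul_sum_sq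
    _ ≤ #{i | ev i ≠ 0} * ∑ i, ev i ^ 2 := by
        gcongr
        exact subset_univ _

theorem conjTranspose_mul_self_apply_self (B : Matrix ι κ 𝕜) (j : κ) :
    (Bᴴ * B) j j = ((∑ i, ‖B i j‖ ^ 2 : ℝ) : 𝕜) := by
  simp [mul_apply, RCLike.conj_mul]

variable [Fintype κ]

theorem norm_conjTranspose_mul_self_apply_le {B : Matrix ι κ 𝕜} {Q : ℝ}
    (hrow : ∀ i, ∑ j, ‖B i j‖ ^ 2 ≤ Q) {j j' : κ} (hjj' : j ≠ j') :
    ‖(Bᴴ * B) j j'‖ ≤ #{i | B i j ≠ 0 ∧ B i j' ≠ 0} * (Q / 2) := by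
  have hpair : ∀ i, ‖B i j‖ ^ 2 + ‖B i j'‖ ^ 2 ≤ Q := fun i => by
    refine le_trans ?_ (hrow i)
    rw [← Finset.sum_pair hjj' (f := fun j => ‖B i j‖ ^ 2)]
    exact Finset.sum_le_univ_sum_of_nonneg fun _ => sq_nonneg _
  calc ‖(Bᴴ * B) j j'‖ ≤ ∑ i, ‖B i j‖ * ‖B i j'‖ := by
        simpa [mul_apply] using norm_sum_le _ (fun i => star (B i j) * B i j')
    _ = ∑ i with B i j ≠ 0 ∧ B i j' ≠ 0, ‖B i j‖ * ‖B i j'‖ := by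
        rw [Finset.sum_filter_of_ne]
        intro i _ h
        constructor <;> rintro h' <;> simp [h'] at h
    _ ≤ ∑ i with B i j ≠ 0 ∧ B i j' ≠ 0, Q / 2 := by
        gcongr with i
        nlinarith [hpair i, sq_nonneg (‖B i j‖ - ‖B i j'‖)]
    _ = _ := by rw [Finset.sum_const, nsmul_eq_mul]

theorem card_sub_sq_le_rank_of_norm_conjTranspose_mul_self_apply_le [DecidableEq κ]
    {B : Matrix ι κ 𝕜} {τ : ℝ} (hcol : ∀ j, ∑ i, ‖B i j‖ ^ 2 = 1)
    (hoff : ∀ j j', j ≠ j' → ‖(Bᴴ * B) j j'‖ ≤ τ) :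
    (Fintype.card κ : ℝ) - (Fintype.card κ * τ) ^ 2 ≤ B.rank := by
  set n : ℝ := (Fintype.card κ : ℝ)
  have hdiag : ∀ j, (Bᴴ * B) j j = 1 := fun j => by
    rw [conjTranspose_mul_self_apply_self, hcol, RCLike.ofReal_one]
  have htrace : RCLike.re (Bᴴ * B).trace = n := by simp [trace, hdiag, n]
  have hentry : ∀ j j', ‖(Bᴴ * B) j j'‖ ^ 2 ≤ (if j = j' then 1 else 0) + τ ^ 2 := fun j j' => by
    split_ifs with h
    · simp [h, hdiag, sq_nonneg]
    · simpa using pow_le_pow_left₀ (norm_nonneg _) (hoff j j' h) 2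
  have hfrob : ∑ j, ∑ j', ‖(Bᴴ * B) j j'‖ ^ 2 ≤ n + (n * τ) ^ 2 := by
    calc _ ≤ ∑ j : κ, ∑ j' : κ, ((if j = j' then 1 else 0) + τ ^ 2) := by gcongr; apply hentry
      _ = n + (n * τ) ^ 2 := by simp [Finset.sum_add_distrib, n]; ring
  have hkey := (isHermitian_conjTranspose_mul_self B).re_trace_sq_le_rank_mul
  rw [htrace] at hkey
  set R : ℝ := ((Bᴴ * B).rank : ℝ)
  have hR : R ≤ B.rank := Nat.cast_le.mpr (rank_mul_le_right Bᴴ B)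
  have hsq : n ^ 2 ≤ R * (n + (n * τ) ^ 2) :=
    hkey.trans (mul_le_mul_of_nonneg_left hfrob (Nat.cast_nonneg _))
  by_contra! hlt
  have hpos : 0 < n + (n * τ) ^ 2 := by
    nlinarith [sq_nonneg (n * τ), (Nat.cast_nonneg _ : (0 : ℝ) ≤ R)]
  nlinarith [mul_lt_mul_of_pos_right (hR.trans_lt hlt) hpos, sq_nonneg (n * τ)]

theorem exists_scaling_of_card_support_le {A : Matrix ι κ 𝕜} {q k : ℕ} (hk : 0 < k)
    (hrow : ∀ i, #{j | A i j ≠ 0} ≤ q) (hcol : ∀ j, k ≤ #{i | A i j ≠ 0}) {ε : ℝ}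
    (hε₀ : 0 < ε) (hε₁ : ε < 1) :
    ∃ B : Matrix ι κ 𝕜, B.rank ≤ A.rank ∧ (∀ i j, B i j ≠ 0 → A i j ≠ 0) ∧
      (∀ j, ∑ i, ‖B i j‖ ^ 2 = 1) ∧ ∀ i, ∑ j, ‖B i j‖ ^ 2 ≤ ((q / k : ℝ) + ε) / (1 - ε) := by
  have hk' : (0 : ℝ) < k := Nat.cast_pos.mpr hk
  set W : ι → κ → ℝ := fun i j => if A i j ≠ 0 then (k : ℝ)⁻¹ else 0
  have hWrow : ∀ i, ∑ j, W i j = #{j | A i j ≠ 0} / k := fun i => by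
    simp [W, Finset.sum_ite, div_eq_mul_inv]
  have hWcol : ∀ j, ∑ i, W i j = #{i | A i j ≠ 0} / k := fun j => by
    simp [W, Finset.sum_ite, div_eq_mul_inv]
  have hWcol_ge : ∀ j, 1 ≤ ∑ i, W i j := fun j => by
    rw [hWcol, le_div_iff₀ hk', one_mul]
    exact_mod_cast hcol j
  obtain ⟨x, y, hx, hy, hcolsum, hrowsum⟩ := exists_scaling_colSum_eq_one
    (P := fun i j => ‖A i j‖ ^ 2) (W := W) (fun _ _ => sq_nonneg _)
    (fun i j => by positivity) (fun i j h => by by_cases hA : A i j = 0 <;> simp_all [W])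
    hWcol_ge hε₀ hε₁
  set B := diagonal (fun i => (√(x i) : 𝕜)) * A * diagonal (fun j => (√(y j) : 𝕜))
  have hB : ∀ i j, B i j = √(x i) * A i j * √(y j) := by simp [B]
  have hBnorm : ∀ i j, ‖B i j‖ ^ 2 = x i * y j * ‖A i j‖ ^ 2 := fun i j => by
    simp [hB, mul_pow, Real.sq_sqrt, hx, hy]
    ring
  refine ⟨B, (rank_mul_le_left _ _).trans (rank_mul_le_right _ _),
    fun i j h hA => h (by simp [hB, hA]), fun j => by simpa [hBnorm] using hcolsum j, fun i => ?_⟩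
  simp only [hBnorm]
  refine (hrowsum i).trans ?_
  rw [hWrow]
  gcongr
  exact_mod_cast hrow i

theorem card_sub_sq_le_rank_of_card_support_le {A : Matrix ι κ 𝕜} {q k t : ℕ}
    (hk : 0 < k) (hrow : ∀ i, #{j | A i j ≠ 0} ≤ q) (hcol : ∀ j, k ≤ #{i | A i j ≠ 0})
    (hinter : ∀ j j', j ≠ j' → #{i | A i j ≠ 0 ∧ A i j' ≠ 0} ≤ t) {ε : ℝ} (hε₀ : 0 < ε)
    (hε₁ : ε < 1) :
    (Fintype.card κ : ℝ) - (Fintype.card κ * (t * (((q / k : ℝ) + ε) / (1 - ε) / 2))) ^ 2 ≤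
      A.rank := by
  obtain ⟨B, hBA, hsupp, hBcol, hBrow⟩ := exists_scaling_of_card_support_le hk hrow hcol hε₀ hε₁
  have hQ : 0 ≤ ((q / k : ℝ) + ε) / (1 - ε) / 2 := by
    have : 0 < 1 - ε := by linarith
    positivity
  have hinterB : ∀ j j', j ≠ j' → #{i | B i j ≠ 0 ∧ B i j' ≠ 0} ≤ t := fun j j' h =>
    (Finset.card_le_card fun i => by
      simpa using fun hi hi' => ⟨hsupp i j hi, hsupp i j' hi'⟩).trans (hinter j j' h)
  refine (card_sub_sq_le_rank_of_norm_conjTranspose_mul_self_apply_le hBcol fun j j' h => ?_).trans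
    (Nat.cast_le.mpr hBA)
  exact (norm_conjTranspose_mul_self_apply_le hBrow h).trans
    (mul_le_mul_of_nonneg_right (Nat.cast_le.mpr (hinterB j j' h)) hQ)

end Matrix

theorem rank_of_design_matrix_general {m n q k t : ℕ} (hk : 0 < k)
    (A : Matrix (Fin m) (Fin n) ℂ) (hA : IsDesignMatrix A q k t) :
    (n : ℝ) - ((q : ℝ) * t * n / (2 * k)) ^ 2 ≤ (A.rank : ℝ) := by
  obtain ⟨hrow, hcol, hinter⟩ := hA
  set bound : ℝ → ℝ := fun ε => n - (n * (t * (((q / k : ℝ) + ε) / (1 - ε) / 2))) ^ 2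
  have hbound : ∀ ε ∈ Ioo (0 : ℝ) 1, bound ε ≤ A.rank := fun ε hε => by
    simpa only [bound, Fintype.card_fin] using
      card_sub_sq_le_rank_of_card_support_le hk hrow hcol hinter hε.1 hε.2
  have hcont : ContinuousAt bound 0 := by
    simp only [bound]
    fun_prop (disch := norm_num)
  have hlim := le_of_tendsto (hcont.tendsto.mono_left nhdsWithin_le_nhds)
    (mem_of_superset (Ioo_mem_nhdsGT one_pos) hbound)
  refine le_of_eq_of_le ?_ hlim
  simp only [bound]
  field_simp
  ring

/-- Rank bound for design matrices: if `m ≥ n` and `A` is an `m × n` complex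
`(q,k,t)`-design matrix, then `rank(A) ≥ n - (q t n / (2k))²`. -/
theorem rank_of_design_matrix {m n q k t : ℕ} (hmn : n ≤ m) (hk : 0 < k)
    (A : Matrix (Fin m) (Fin n) ℂ) (hA : IsDesignMatrix A q k t) :
    (n : ℝ) - ((q : ℝ) * t * n / (2 * k)) ^ 2 ≤ (A.rank : ℝ) :=
  rank_of_design_matrix_general hk A hA
end

section
/- Transfer of rank bounds via Nullstellensatz: Let m, n, r be positive integers and T ⊆ [m]×[n]. If every complex m×n matrix whose support is exactly T (nonzero exactly at positions in T) has rank ≥ r, then there is an explicit bound P₀(n,m) such that over every field F of characteristic zero or characteristic p > P₀(n,m), every m×n T-matrix over F has rank ≥ r. -/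
/-!
"Every `m × n` matrix with support `T` has rank at least `r`" is a first-order sentence in the
language of rings: the entries are the quantified variables, and rank at least `r` means that some
`r × r` minor, a polynomial with integer coefficients in the entries, is nonzero. The sentence holds
in `ℂ`, hence in every algebraically closed field of characteristic zero since that theory is
complete, hence by compactness (the Lefschetz principle) in every algebraically closed field of
characteristic `p` outside a finite set of primes. Only the finitely many pairs `(r, T)` with
`r ≤ m` can satisfy the hypothesis, so `P₀(n, m)` can be taken to bound all of their exceptional
primes. An arbitrary field `F` is handled through its algebraic closure, which does not change ranks.
-/

open Module Submodule FirstOrder Language Ring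

section LinearAlgebra

variable {K : Type*} [Field K]

theorem exists_linearIndependent_comp_of_le_finrank_span {ι V : Type*} [Finite ι]
    [AddCommGroup V] [Module K V] {v : ι → V} {r : ℕ}
    (h : r ≤ finrank K (span K (Set.range v))) :
    ∃ c : Fin r → ι, LinearIndependent K (v ∘ c) := by
  obtain ⟨κ, a, ha, hspan, hli⟩ := exists_linearIndependent' K v
  have : Finite κ := Finite.of_injective a ha
  have := Fintype.ofFinite κ
  rw [← hspan, finrank_span_eq_card hli] at h
  let e : Fin r ↪ κ := (Fin.castLEEmb h).trans (Fintype.equivFin κ).symm.toEmbedding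
  exact ⟨a ∘ e, hli.comp e e.injective⟩

namespace Matrix

variable {m n : Type*} [Fintype m] [Fintype n]

theorem le_rank_iff_exists_det_submatrix_ne_zero (A : Matrix m n K) {r : ℕ} :
    r ≤ A.rank ↔ ∃ (ri : Fin r → m) (ci : Fin r → n), (A.submatrix ri ci).det ≠ 0 := by
  constructor
  · intro h
    rw [rank_eq_finrank_span_cols] at h
    obtain ⟨ci, hci⟩ := exists_linearIndependent_comp_of_le_finrank_span h
    have hrank : r ≤ (A.submatrix id ci).rank := by
      rw [rank_eq_finrank_span_cols, finrank_span_eq_card (b := (A.submatrix id ci).col) hci,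
        Fintype.card_fin]
    rw [rank_eq_finrank_span_row] at hrank
    obtain ⟨ri, hri⟩ := exists_linearIndependent_comp_of_le_finrank_span hrank
    exact ⟨ri, ci, ((isUnit_iff_isUnit_det _).1 (linearIndependent_rows_iff_isUnit.1 hri)).ne_zero⟩
  · rintro ⟨ri, ci, hdet⟩
    calc r = (A.submatrix ri ci).rank := by rw [rank_of_det_ne_zero hdet, Fintype.card_fin]
      _ ≤ A.rank := rank_submatrix_le A ri ci

theorem rank_map {L : Type*} [Field L] (f : K →+* L) (A : Matrix m n K) :
    (A.map f).rank = A.rank :=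
  eq_of_forall_le_iff fun r => by
    simp_rw [le_rank_iff_exists_det_submatrix_ne_zero, submatrix_map, ← RingHom.mapMatrix_apply,
      ← RingHom.map_det, map_ne_zero]

end Matrix

end LinearAlgebra

section ModelTheory

variable {α : Type*}

noncomputable def eqZeroFormula (p : FreeCommRing α) : Language.ring.Formula α :=
  (termOfFreeCommRing p).equal 0

@[simp]
theorem realize_eqZeroFormula {R : Type*} [CommRing R] [CompatibleRing R] (p : FreeCommRing α)
    (v : α → R) : (eqZeroFormula p).Realize v ↔ FreeCommRing.lift v p = 0 := by
  rw [eqZeroFormula, Formula.realize_equal, realize_termOfFreeCommRing, realize_zero]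

theorem exists_forall_ACF_prime_models_of_ACF_zero_models {ι : Type*} [Finite ι]
    (φ : ι → Language.ring.Sentence) :
    ∃ N : ℕ, ∀ i, Theory.ACF 0 ⊨ᵇ φ i → ∀ p : ℕ, p.Prime → N < p → Theory.ACF p ⊨ᵇ φ i := by
  have hbound (i : ι) : ∃ N : ℕ, Theory.ACF 0 ⊨ᵇ φ i →
      ∀ p : ℕ, p.Prime → N < p → Theory.ACF p ⊨ᵇ φ i := by
    by_cases h : Theory.ACF 0 ⊨ᵇ φ i
    · obtain ⟨N, hN⟩ := ((Field.finite_ACF_prime_not_realize_of_ACF_zero_realize _ h).image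
        ((↑) : Nat.Primes → ℕ)).bddAbove
      refine ⟨N, fun _ p hp hNp => ?_⟩
      by_contra hφ
      exact absurd (hN ⟨⟨p, hp⟩, hφ, rfl⟩) (not_le.2 hNp)
    · exact ⟨0, fun h' => absurd h' h⟩
  choose N hN using hbound
  obtain ⟨B, hB⟩ := (Set.finite_range N).bddAbove
  exact ⟨B, fun i h p hp hBp => hN i h p hp ((hB ⟨i, rfl⟩).trans_lt hBp)⟩

end ModelTheory

namespace Matrix

variable {m n : Type*}

noncomputable def genericMinor {r : ℕ} (ri : Fin r → m) (ci : Fin r → n) :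
    FreeCommRing (m × n) :=
  (of fun a b => FreeCommRing.of (ri a, ci b)).det

theorem lift_genericMinor {R : Type*} [CommRing R] (v : m × n → R) {r : ℕ} (ri : Fin r → m)
    (ci : Fin r → n) :
    FreeCommRing.lift v (genericMinor ri ci) = ((of fun i j => v (i, j)).submatrix ri ci).det := by
  rw [genericMinor, RingHom.map_det]
  congr
  ext
  simp

variable [Fintype m] [Fintype n]

open Classical in
noncomputable def supportEqFormula (T : Set (m × n)) : Language.ring.Formula (m × n) :=
  Formula.iInf fun ij => if ij ∈ T then (eqZeroFormula (FreeCommRing.of ij)).not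
    else eqZeroFormula (FreeCommRing.of ij)

noncomputable def nonzeroMinorFormula (m n : Type*) [Fintype m] [Fintype n] (r : ℕ) :
    Language.ring.Formula (m × n) :=
  Formula.iSup fun rc : (Fin r → m) × (Fin r → n) =>
    (eqZeroFormula (genericMinor rc.1 rc.2)).not

noncomputable def rankLowerBoundSentence (r : ℕ) (T : Set (m × n)) : Language.ring.Sentence :=
  Formula.iAlls (m × n) (((supportEqFormula T).imp (nonzeroMinorFormula m n r)).relabel Sum.inr)

section Realize

variable {K : Type*} [Field K] [CompatibleRing K]

theorem realize_supportEqFormula (T : Set (m × n)) (v : m × n → K) :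
    (supportEqFormula T).Realize v ↔ ∀ i j, v (i, j) ≠ 0 ↔ (i, j) ∈ T := by
  classical
  simp only [supportEqFormula, Formula.realize_iInf, Prod.forall]
  refine forall₂_congr fun i j => ?_
  split_ifs with h <;> simp [h]

theorem realize_nonzeroMinorFormula (r : ℕ) (v : m × n → K) :
    (nonzeroMinorFormula m n r).Realize v ↔ r ≤ (of fun i j => v (i, j)).rank := by
  simp only [nonzeroMinorFormula, Formula.realize_iSup, Formula.realize_not,
    realize_eqZeroFormula, lift_genericMinor, le_rank_iff_exists_det_submatrix_ne_zero,
    Prod.exists]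

theorem realize_rankLowerBoundSentence (r : ℕ) (T : Set (m × n)) :
    K ⊨ rankLowerBoundSentence r T ↔
      ∀ A : Matrix m n K, (∀ i j, A i j ≠ 0 ↔ (i, j) ∈ T) → r ≤ A.rank := by
  simp only [rankLowerBoundSentence, Sentence.Realize, Formula.realize_iAlls,
    Formula.realize_relabel, Formula.realize_imp, Function.comp_def, Sum.elim_inr,
    realize_supportEqFormula, realize_nonzeroMinorFormula]
  exact ⟨fun h A => h fun ij => A ij.1 ij.2, fun h v => h (of fun i j => v (i, j))⟩

end Realize

theorem ACF_zero_models_rankLowerBoundSentence {r : ℕ} {T : Set (m × n)}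
    (h : ∀ A : Matrix m n ℂ, (∀ i j, A i j ≠ 0 ↔ (i, j) ∈ T) → r ≤ A.rank) :
    Theory.ACF 0 ⊨ᵇ rankLowerBoundSentence r T := by
  let _ := compatibleRingOfRing ℂ
  rw [← (Field.ACF_isComplete (Or.inr rfl)).realize_sentence_iff _ ℂ]
  exact (realize_rankLowerBoundSentence r T).2 h

theorem le_rank_of_ACF_ringChar_models {F : Type*} [Field F] {r : ℕ} {T : Set (m × n)}
    (h : Theory.ACF (ringChar F) ⊨ᵇ rankLowerBoundSentence r T) (B : Matrix m n F)
    (hB : ∀ i j, B i j ≠ 0 ↔ (i, j) ∈ T) : r ≤ B.rank := by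
  let K := AlgebraicClosure F
  let _ := compatibleRingOfRing K
  have : CharP K (ringChar F) := charP_of_injective_algebraMap' F _
  rw [← rank_map (algebraMap F K)]
  refine (realize_rankLowerBoundSentence r T).1 (h.realize_sentence K) _ fun i j => ?_
  simpa only [map_apply, map_ne_zero] using hB i j

end Matrix

/-- Transfer of rank bounds via the Nullstellensatz: there is a bound `P₀(n, m)` such
that whenever every complex `m × n` matrix with support exactly `T` has rank at least
`r`, the same holds over every field of characteristic zero or of characteristic
greater than `P₀(n, m)`. -/
theorem rank_bound_transfer :
    ∃ P₀ : ℕ → ℕ → ℕ, ∀ (m n r : ℕ) (T : Set (Fin m × Fin n)),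
      (∀ A : Matrix (Fin m) (Fin n) ℂ, (∀ i j, A i j ≠ 0 ↔ (i, j) ∈ T) → r ≤ A.rank) →
      ∀ (F : Type) [Field F], (ringChar F = 0 ∨ P₀ n m < ringChar F) →
        ∀ B : Matrix (Fin m) (Fin n) F, (∀ i j, B i j ≠ 0 ↔ (i, j) ∈ T) → r ≤ B.rank := by
  choose N hN using fun m n => exists_forall_ACF_prime_models_of_ACF_zero_models
    fun rT : Fin (m + 1) × Set (Fin m × Fin n) => Matrix.rankLowerBoundSentence rT.1 rT.2
  refine ⟨fun n m => N m n, fun m n r T hC F _ hF B hB =>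
    Matrix.le_rank_of_ACF_ringChar_models ?_ B hB⟩
  have h0 := Matrix.ACF_zero_models_rankLowerBoundSentence hC
  rcases hF with hF | hF
  · rwa [hF]
  · have hr : r < m + 1 := Nat.lt_succ_of_le <|
      (hC (Matrix.of fun i j => T.indicator 1 (i, j)) fun i j => by simp).trans
        (Matrix.rank_le_height _)
    exact hN m n (⟨r, hr⟩, T) h0 _ (CharP.char_prime_of_ne_zero F (ne_zero_of_lt hF)) hF
end
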